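/- arXiv:math/0601109 — 2 statements merged into one kernel-verified Lean document; each statement's English description precedes it below -/
import Mathlib

section
/- Let F(z) = a_d z^d + a_{d-1} z^{d-1} + ... + a_0 be a complex polynomial of degree d ≥ 1 (so a_d ≠ 0), viewed as a map F : ℂ → ℂ, and let E ⊆ ℂ be a bounded set. Then d_∞(F⁻¹(E)) = |a_d|^{-1/d} · d_∞(E)^{1/d}. -/
/-!
For bounded `E ⊆ ℂ` the transfinite diameter equals the Chebyshev constant
`τ(E) = inf ‖p‖_E ^ (1 / deg p)` over monic `p` (Fekete–Szegő). Adding a point `z` to a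
configuration of `m` points multiplies its Vandermonde product by `|q(z)|` for a monic `q` of
degree `m`, which gives `d_n(E) ≥ τ(E)`. Conversely, the Vandermonde determinant of `m` points can
be computed in any monic basis of degree `0, …, m - 1`; in the basis `X ^ (i % k) * p ^ (i / k)`
it is at most `m! · ∏ ‖·‖_E`, which gives `limsup d_n(E) ≤ ‖p‖_E ^ (1 / k)`.

The Chebyshev constant transforms exactly under `F` of degree `d`: if `p` is monic on `E`, then
`p ∘ F / a_d ^ m` is monic of degree `m d` on `F⁻¹(E)`; if `q` is monic on `F⁻¹(E)`, then
`∏_{q(β) = 0} (X - F(β))` is monic on `E`, and its modulus at `w ∈ E` is that of the resultant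
of `q` and `F - w`, namely `|a_d| ^ m ∏_{F(α) = w} |q(α)|`. Hence `τ(E) = |a_d| τ(F⁻¹(E)) ^ d`.
-/

open Polynomial Filter Topology

/-- The Fekete–Leja transfinite diameter of a set `E ⊆ ℂ` (the case `N = 1`):
`d_∞(E) = limsup_n d_n(E)`, where
`d_n(E) = (sup over n+1 points ζ_0, …, ζ_n of E of ∏_{i<j} |ζ_i − ζ_j|)^{2/(n(n+1))}`. -/
noncomputable def transfiniteDiameter1 (E : Set ℂ) : ℝ :=
  Filter.limsup (fun n : ℕ =>
    (sSup {x : ℝ | ∃ ζ : Fin (n + 1) → ℂ, (∀ i, ζ i ∈ E) ∧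
        x = ∏ p ∈ Finset.univ.filter (fun p : Fin (n + 1) × Fin (n + 1) => p.1 < p.2),
              ‖ζ p.1 - ζ p.2‖})
      ^ ((2 : ℝ) / ((n * (n + 1) : ℕ) : ℝ)))
    Filter.atTop

noncomputable def supNormOn (E : Set ℂ) (p : ℂ[X]) : ℝ :=
  ⨆ z : E, ‖p.eval (z : ℂ)‖

section supNormOn

variable {E : Set ℂ}

theorem supNormOn_nonneg (E : Set ℂ) (p : ℂ[X]) : 0 ≤ supNormOn E p :=
  Real.iSup_nonneg fun _ => norm_nonneg _

theorem norm_eval_le_supNormOn (hE : Bornology.IsBounded E) (p : ℂ[X]) {z : ℂ} (hz : z ∈ E) :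
    ‖p.eval z‖ ≤ supNormOn E p := by
  have hbdd : BddAbove ((fun z : ℂ => ‖p.eval z‖) '' closure E) :=
    (hE.isCompact_closure.image p.continuous.norm).bddAbove
  exact le_ciSup (f := fun z : E => ‖p.eval (z : ℂ)‖)
    (hbdd.mono (by rintro _ ⟨w, rfl⟩; exact ⟨w, subset_closure w.2, rfl⟩)) ⟨z, hz⟩

theorem supNormOn_le {p : ℂ[X]} {b : ℝ} (hb : 0 ≤ b) (h : ∀ z ∈ E, ‖p.eval z‖ ≤ b) :
    supNormOn E p ≤ b :=
  Real.iSup_le (fun z => h z z.2) hb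

theorem mul_supNormOn_le {p : ℂ[X]} {c b : ℝ} (hc : 0 ≤ c) (hb : 0 ≤ b)
    (h : ∀ z ∈ E, c * ‖p.eval z‖ ≤ b) : c * supNormOn E p ≤ b := by
  rw [supNormOn, Real.mul_iSup_of_nonneg hc]
  exact Real.iSup_le (fun z => h z z.2) hb

theorem supNormOn_mul_le (hE : Bornology.IsBounded E) (p q : ℂ[X]) :
    supNormOn E (p * q) ≤ supNormOn E p * supNormOn E q :=
  supNormOn_le (mul_nonneg (supNormOn_nonneg E p) (supNormOn_nonneg E q)) fun z hz => by
    rw [eval_mul, norm_mul]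
    exact mul_le_mul (norm_eval_le_supNormOn hE p hz) (norm_eval_le_supNormOn hE q hz)
      (norm_nonneg _) (supNormOn_nonneg E p)

theorem supNormOn_pow_le (hE : Bornology.IsBounded E) (p : ℂ[X]) (j : ℕ) :
    supNormOn E (p ^ j) ≤ supNormOn E p ^ j := by
  induction j with
  | zero => exact supNormOn_le zero_le_one fun z _ => by simp
  | succ j ih =>
    rw [pow_succ, pow_succ]
    exact (supNormOn_mul_le hE _ _).trans
      (mul_le_mul_of_nonneg_right ih (supNormOn_nonneg E p))

end supNormOn

instance : Nonempty {p : ℂ[X] // p.Monic ∧ p.natDegree ≠ 0} := ⟨⟨X, monic_X, by simp⟩⟩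

noncomputable def chebyshevConstant (E : Set ℂ) : ℝ :=
  ⨅ p : {p : ℂ[X] // p.Monic ∧ p.natDegree ≠ 0},
    supNormOn E p ^ ((p.1.natDegree : ℝ)⁻¹)

section chebyshevConstant

variable {E : Set ℂ}

theorem chebyshevConstant_nonneg (E : Set ℂ) : 0 ≤ chebyshevConstant E :=
  Real.iInf_nonneg fun _ => Real.rpow_nonneg (supNormOn_nonneg E _) _

theorem chebyshevConstant_pow_natDegree_le {p : ℂ[X]} (hp : p.Monic) (hk : p.natDegree ≠ 0) :
    chebyshevConstant E ^ p.natDegree ≤ supNormOn E p := by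
  have hbdd : BddBelow (Set.range fun p : {p : ℂ[X] // p.Monic ∧ p.natDegree ≠ 0} =>
      supNormOn E p ^ ((p.1.natDegree : ℝ)⁻¹)) :=
    ⟨0, by rintro _ ⟨q, rfl⟩; exact Real.rpow_nonneg (supNormOn_nonneg E _) _⟩
  have h := ciInf_le hbdd ⟨p, hp, hk⟩
  rw [← Real.rpow_natCast, ← Real.le_rpow_inv_iff_of_pos (chebyshevConstant_nonneg E)
    (supNormOn_nonneg E p) (by positivity)]
  exact h

theorem le_chebyshevConstant {x : ℝ} (hx : 0 ≤ x)
    (h : ∀ p : ℂ[X], p.Monic → p.natDegree ≠ 0 → x ^ p.natDegree ≤ supNormOn E p) :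
    x ≤ chebyshevConstant E := by
  refine le_ciInf fun ⟨p, hp, hk⟩ => ?_
  rw [Real.le_rpow_inv_iff_of_pos hx (supNormOn_nonneg E p) (by positivity), Real.rpow_natCast]
  exact h p hp hk

theorem exists_monic_supNormOn_lt {τ : ℝ} (hτ : chebyshevConstant E < τ) :
    ∃ p : ℂ[X], p.Monic ∧ p.natDegree ≠ 0 ∧ supNormOn E p < τ ^ p.natDegree := by
  obtain ⟨⟨p, hp, hk⟩, hlt⟩ := exists_lt_of_ciInf_lt hτ
  refine ⟨p, hp, hk, ?_⟩
  have hτ0 : 0 ≤ τ := (chebyshevConstant_nonneg E).trans hτ.le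
  rwa [← Real.rpow_natCast, ← Real.rpow_inv_lt_iff_of_pos (supNormOn_nonneg E p) hτ0
    (by positivity)]

theorem chebyshevConstant_empty : chebyshevConstant ∅ = 0 := by
  refine le_antisymm ?_ (chebyshevConstant_nonneg ∅)
  simpa [supNormOn] using chebyshevConstant_pow_natDegree_le (E := ∅) monic_X (by simp)

end chebyshevConstant

theorem Matrix.norm_det_le_factorial_mul_prod {𝕜 n : Type*} [NormedField 𝕜] [Fintype n]
    [DecidableEq n] (A : Matrix n n 𝕜) {s : n → ℝ} (h : ∀ i j, ‖A i j‖ ≤ s j) :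
    ‖A.det‖ ≤ (Fintype.card n).factorial * ∏ j, s j := by
  calc ‖A.det‖ ≤ ∑ σ : Equiv.Perm n, ‖Equiv.Perm.sign σ • ∏ i, A (σ i) i‖ := by
        rw [Matrix.det_apply]; exact norm_sum_le _ _
    _ ≤ ∑ _σ : Equiv.Perm n, ∏ j, s j := by
        gcongr with σ
        have hsign : ‖Equiv.Perm.sign σ • ∏ i, A (σ i) i‖ = ∏ i, ‖A (σ i) i‖ := by
          rcases Int.units_eq_one_or (Equiv.Perm.sign σ) with h | h <;> simp [h]
        rw [hsign]
        exact Finset.prod_le_prod (fun _ _ => norm_nonneg _) fun i _ => h _ _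
    _ = (Fintype.card n).factorial * ∏ j, s j := by
        simp [Fintype.card_perm]

noncomputable def vandermondeNorm {m : ℕ} (ζ : Fin m → ℂ) : ℝ :=
  ∏ p ∈ Finset.univ.filter (fun p : Fin m × Fin m => p.1 < p.2), ‖ζ p.1 - ζ p.2‖

section vandermondeNorm

variable {m : ℕ}

theorem vandermondeNorm_nonneg (ζ : Fin m → ℂ) : 0 ≤ vandermondeNorm ζ :=
  Finset.prod_nonneg fun _ _ => norm_nonneg _

theorem vandermondeNorm_eq_prod_Iio (ζ : Fin m → ℂ) :
    vandermondeNorm ζ = ∏ j, ∏ i ∈ Finset.Iio j, ‖ζ i - ζ j‖ := by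
  rw [vandermondeNorm, Finset.prod_filter, ← Finset.univ_product_univ, Finset.prod_product_right]
  refine Finset.prod_congr rfl fun j _ => ?_
  rw [← Finset.prod_filter]
  congr 1
  ext i; simp

theorem vandermondeNorm_eq_norm_det (ζ : Fin m → ℂ) :
    vandermondeNorm ζ = ‖(Matrix.vandermonde ζ).det‖ := by
  rw [Matrix.det_vandermonde, norm_prod, vandermondeNorm, Finset.prod_filter,
    ← Finset.univ_product_univ, Finset.prod_product]
  refine Finset.prod_congr rfl fun i _ => ?_
  rw [← Finset.prod_filter, norm_prod]
  refine Finset.prod_congr (by ext j; simp) fun j _ => norm_sub_rev _ _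

theorem vandermondeNorm_snoc (ζ : Fin m → ℂ) (z : ℂ) :
    vandermondeNorm (Fin.snoc ζ z : Fin (m + 1) → ℂ) = (∏ i, ‖ζ i - z‖) * vandermondeNorm ζ := by
  rw [vandermondeNorm_eq_prod_Iio, vandermondeNorm_eq_prod_Iio, Fin.prod_univ_castSucc,
    Fin.Iio_last_eq_map, Finset.prod_map, mul_comm]
  simp only [Fin.Iio_castSucc, Finset.prod_map, Fin.coe_castSuccEmb, Fin.snoc_castSucc,
    Fin.snoc_last]

end vandermondeNorm

theorem vandermondeNorm_le_factorial_mul_prod_supNormOn {E : Set ℂ} (hE : Bornology.IsBounded E)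
    {m : ℕ} {ζ : Fin m → ℂ} (hζ : ∀ i, ζ i ∈ E) (p : Fin m → ℂ[X])
    (hdeg : ∀ i, (p i).natDegree = i) (hmonic : ∀ i, (p i).Monic) :
    vandermondeNorm ζ ≤ m.factorial * ∏ i, supNormOn E (p i) := by
  rw [vandermondeNorm_eq_norm_det, Matrix.det_eval_matrixOfPolynomials_eq_det_vandermonde ζ p
    hdeg hmonic]
  simpa using Matrix.norm_det_le_factorial_mul_prod (Matrix.of fun i j => (p j).eval (ζ i))
    fun i j => norm_eval_le_supNormOn hE (p j) (hζ i)

noncomputable def maxVandermondeNorm (E : Set ℂ) (m : ℕ) : ℝ :=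
  sSup {x : ℝ | ∃ ζ : Fin m → ℂ, (∀ i, ζ i ∈ E) ∧ x = vandermondeNorm ζ}

section maxVandermondeNorm

variable {E : Set ℂ} {m : ℕ}

theorem maxVandermondeNorm_nonneg (E : Set ℂ) (m : ℕ) : 0 ≤ maxVandermondeNorm E m :=
  Real.sSup_nonneg <| by rintro _ ⟨ζ, -, rfl⟩; exact vandermondeNorm_nonneg ζ

theorem vandermondeNorm_le_maxVandermondeNorm (hE : Bornology.IsBounded E) {ζ : Fin m → ℂ}
    (hζ : ∀ i, ζ i ∈ E) : vandermondeNorm ζ ≤ maxVandermondeNorm E m := by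
  refine le_csSup ⟨m.factorial * ∏ i : Fin m, supNormOn E (X ^ (i : ℕ)), ?_⟩ ⟨ζ, hζ, rfl⟩
  rintro _ ⟨ξ, hξ, rfl⟩
  exact vandermondeNorm_le_factorial_mul_prod_supNormOn hE hξ _
    (fun i => natDegree_X_pow _) (fun _ => monic_X_pow _)

theorem mul_maxVandermondeNorm_le {c b : ℝ} (hc : 0 ≤ c) (hb : 0 ≤ b)
    (h : ∀ ζ : Fin m → ℂ, (∀ i, ζ i ∈ E) → c * vandermondeNorm ζ ≤ b) :
    c * maxVandermondeNorm E m ≤ b := by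
  rw [maxVandermondeNorm, ← smul_eq_mul, ← Real.sSup_smul_of_nonneg hc]
  exact Real.sSup_le (by rintro _ ⟨_, ⟨ζ, hζ, rfl⟩, rfl⟩; exact h ζ hζ) hb

theorem maxVandermondeNorm_le {b : ℝ} (hb : 0 ≤ b)
    (h : ∀ ζ : Fin m → ℂ, (∀ i, ζ i ∈ E) → vandermondeNorm ζ ≤ b) :
    maxVandermondeNorm E m ≤ b :=
  Real.sSup_le (by rintro _ ⟨ζ, hζ, rfl⟩; exact h ζ hζ) hb

theorem one_le_maxVandermondeNorm_one (hE : Bornology.IsBounded E) (hne : E.Nonempty) :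
    1 ≤ maxVandermondeNorm E 1 := by
  obtain ⟨z, hz⟩ := hne
  refine le_of_eq_of_le ?_ (vandermondeNorm_le_maxVandermondeNorm hE (ζ := fun _ => z)
    fun _ => hz)
  simp [vandermondeNorm_eq_prod_Iio]

theorem chebyshevConstant_pow_mul_maxVandermondeNorm_le (hE : Bornology.IsBounded E)
    (hm : m ≠ 0) :
    chebyshevConstant E ^ m * maxVandermondeNorm E m ≤ maxVandermondeNorm E (m + 1) := by
  refine mul_maxVandermondeNorm_le (by positivity [chebyshevConstant_nonneg E])
    (maxVandermondeNorm_nonneg E _) fun ζ hζ => ?_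
  set q : ℂ[X] := ∏ i, (X - C (ζ i))
  have hdeg : q.natDegree = m := by simp [q]
  have hq : chebyshevConstant E ^ m ≤ supNormOn E q := by
    have h := chebyshevConstant_pow_natDegree_le (E := E) (monic_prod_X_sub_C ζ Finset.univ)
      (by rwa [hdeg])
    rwa [hdeg] at h
  have hq_mul : vandermondeNorm ζ * supNormOn E q ≤ maxVandermondeNorm E (m + 1) := by
    refine mul_supNormOn_le (vandermondeNorm_nonneg ζ) (maxVandermondeNorm_nonneg E _)
      fun z hz => ?_
    have hz_snoc := vandermondeNorm_le_maxVandermondeNorm hE (ζ := Fin.snoc ζ z)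
      (Fin.lastCases (by simpa using hz) (by simpa using hζ))
    rw [vandermondeNorm_snoc] at hz_snoc
    simpa [q, eval_prod, norm_prod, norm_sub_rev, mul_comm] using hz_snoc
  exact (mul_le_mul_of_nonneg_right hq (vandermondeNorm_nonneg ζ)).trans
    (by rwa [mul_comm])

theorem chebyshevConstant_pow_choose_two_le (hE : Bornology.IsBounded E) (hne : E.Nonempty)
    (hm : m ≠ 0) : chebyshevConstant E ^ m.choose 2 ≤ maxVandermondeNorm E m := by
  induction m, Nat.one_le_iff_ne_zero.2 hm using Nat.le_induction with
  | base => simpa using one_le_maxVandermondeNorm_one hE hne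
  | succ m hm ih =>
    rw [Nat.choose_succ_succ, Nat.choose_one_right, pow_add]
    calc chebyshevConstant E ^ m * chebyshevConstant E ^ m.choose 2
        ≤ chebyshevConstant E ^ m * maxVandermondeNorm E m :=
          mul_le_mul_of_nonneg_left (ih (by omega)) (pow_nonneg (chebyshevConstant_nonneg E) _)
      _ ≤ maxVandermondeNorm E (m + 1) :=
          chebyshevConstant_pow_mul_maxVandermondeNorm_le hE (by omega)

end maxVandermondeNorm

theorem exists_maxVandermondeNorm_le {E : Set ℂ} (hE : Bornology.IsBounded E) {p : ℂ[X]}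
    (hp : p.Monic) (hk : p.natDegree ≠ 0) {τ : ℝ} (hτ : 0 < τ)
    (hpτ : supNormOn E p ≤ τ ^ p.natDegree) :
    ∃ C : ℝ, 0 < C ∧
      ∀ m, maxVandermondeNorm E m ≤ m.factorial * C ^ m * τ ^ m.choose 2 := by
  set k := p.natDegree
  set B := max 1 (supNormOn E X / τ)
  have hB : 1 ≤ B := le_max_left _ _
  have hXB : supNormOn E X ≤ B * τ := (div_le_iff₀ hτ).1 (le_max_right _ _)
  set q : ℕ → ℂ[X] := fun i => X ^ (i % k) * p ^ (i / k)
  have hq_monic (i : ℕ) : (q i).Monic := (monic_X_pow _).mul (hp.pow _)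
  have hq_deg (i : ℕ) : (q i).natDegree = i := by
    rw [(monic_X_pow _).natDegree_mul (hp.pow _), natDegree_X_pow, natDegree_pow,
      Nat.mod_add_div']
  have hq_norm (i : ℕ) : supNormOn E (q i) ≤ B ^ k * τ ^ i :=
    calc supNormOn E (q i) ≤ supNormOn E X ^ (i % k) * supNormOn E p ^ (i / k) :=
          (supNormOn_mul_le hE _ _).trans <| mul_le_mul (supNormOn_pow_le hE _ _)
            (supNormOn_pow_le hE _ _) (supNormOn_nonneg E _)
            (pow_nonneg (supNormOn_nonneg E X) _)
      _ ≤ (B * τ) ^ (i % k) * (τ ^ k) ^ (i / k) :=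
          mul_le_mul (pow_le_pow_left₀ (supNormOn_nonneg E X) hXB _)
            (pow_le_pow_left₀ (supNormOn_nonneg E p) hpτ _)
            (pow_nonneg (supNormOn_nonneg E p) _) (pow_nonneg (by positivity) _)
      _ = B ^ (i % k) * τ ^ i := by
          rw [mul_pow, ← pow_mul, mul_assoc, ← pow_add, Nat.mod_add_div]
      _ ≤ B ^ k * τ ^ i := mul_le_mul_of_nonneg_right
          (pow_le_pow_right₀ hB (Nat.mod_lt _ (Nat.pos_of_ne_zero hk)).le) (pow_nonneg hτ.le _)
  refine ⟨B ^ k, by positivity, fun m => maxVandermondeNorm_le (by positivity) fun ζ hζ => ?_⟩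
  calc vandermondeNorm ζ ≤ m.factorial * ∏ i : Fin m, supNormOn E (q i) :=
        vandermondeNorm_le_factorial_mul_prod_supNormOn hE hζ _ (fun i => hq_deg i)
          fun i => hq_monic i
    _ ≤ m.factorial * ∏ i : Fin m, (B ^ k * τ ^ (i : ℕ)) := mul_le_mul_of_nonneg_left
        (Finset.prod_le_prod (fun _ _ => supNormOn_nonneg E _) fun i _ => hq_norm i)
        (Nat.cast_nonneg _)
    _ = m.factorial * (B ^ k) ^ m * τ ^ m.choose 2 := by
        rw [Finset.prod_mul_distrib, Finset.prod_const, Finset.card_univ, Fintype.card_fin,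
          Finset.prod_pow_eq_pow_sum, Fin.sum_univ_eq_sum_range (fun i => i),
          Finset.sum_range_id, ← Nat.choose_two_right, mul_assoc]

noncomputable def nthDiameter (E : Set ℂ) (n : ℕ) : ℝ :=
  maxVandermondeNorm E (n + 1) ^ ((2 : ℝ) / ((n * (n + 1) : ℕ) : ℝ))

theorem transfiniteDiameter1_eq_limsup_nthDiameter (E : Set ℂ) :
    transfiniteDiameter1 E = limsup (nthDiameter E) atTop := rfl

theorem two_div_mul_succ_eq_inv_choose_two (n : ℕ) :
    (2 : ℝ) / ((n * (n + 1) : ℕ) : ℝ) = (((n + 1).choose 2 : ℕ) : ℝ)⁻¹ := by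
  rw [Nat.cast_choose_two, inv_div]
  push_cast
  ring

theorem chebyshevConstant_le_nthDiameter {E : Set ℂ} (hE : Bornology.IsBounded E) {n : ℕ}
    (hn : n ≠ 0) : chebyshevConstant E ≤ nthDiameter E n := by
  rcases E.eq_empty_or_nonempty with rfl | hne
  · rw [chebyshevConstant_empty]
    exact Real.rpow_nonneg (maxVandermondeNorm_nonneg _ _) _
  have hchoose : (0 : ℝ) < ((n + 1).choose 2 : ℕ) := by exact_mod_cast Nat.choose_pos (by omega)
  rw [nthDiameter, two_div_mul_succ_eq_inv_choose_two, Real.le_rpow_inv_iff_of_pos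
    (chebyshevConstant_nonneg E) (maxVandermondeNorm_nonneg E _) hchoose, Real.rpow_natCast]
  exact chebyshevConstant_pow_choose_two_le hE hne n.succ_ne_zero

theorem nthDiameter_le {E : Set ℂ} {τ C : ℝ} (hτ : 0 < τ) (hC : 0 < C)
    (h : ∀ m, maxVandermondeNorm E m ≤ m.factorial * C ^ m * τ ^ m.choose 2) {n : ℕ}
    (hn : n ≠ 0) : nthDiameter E n ≤ ((n + 1) * C) ^ (2 / n : ℝ) * τ := by
  have hfac : ((n + 1).factorial : ℝ) ≤ (n + 1) ^ (n + 1) := by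
    exact_mod_cast Nat.factorial_le_pow (n + 1)
  have hchoose : (0 : ℝ) < ((n + 1).choose 2 : ℕ) := by exact_mod_cast Nat.choose_pos (by omega)
  have hexp : ((n + 1 : ℕ) : ℝ) * (((n + 1).choose 2 : ℕ) : ℝ)⁻¹ = 2 / n := by
    have hn' : (n : ℝ) ≠ 0 := by exact_mod_cast hn
    rw [Nat.cast_choose_two]
    push_cast
    rw [add_sub_cancel_right]
    field_simp
  calc nthDiameter E n
      ≤ (((n + 1) * C) ^ (n + 1) * τ ^ (n + 1).choose 2) ^ (((n + 1).choose 2 : ℕ) : ℝ)⁻¹ := by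
        rw [nthDiameter, two_div_mul_succ_eq_inv_choose_two]
        gcongr
        · exact maxVandermondeNorm_nonneg E _
        refine (h (n + 1)).trans ?_
        rw [mul_pow]
        gcongr
    _ = ((n + 1) * C) ^ (2 / n : ℝ) * τ := by
        rw [Real.mul_rpow (by positivity) (by positivity), ← Real.rpow_natCast,
          ← Real.rpow_natCast τ, ← Real.rpow_mul (by positivity), ← Real.rpow_mul hτ.le,
          mul_inv_cancel₀ hchoose.ne', Real.rpow_one, hexp]

theorem tendsto_succ_mul_rpow_two_div {C : ℝ} (hC : 0 < C) :
    Tendsto (fun n : ℕ => ((n + 1) * C) ^ (2 / n : ℝ)) atTop (𝓝 1) := by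
  have hsucc : Tendsto (fun n : ℕ => ((n : ℝ) + 1) ^ (2 / (1 * ((n : ℝ) + 1) + -1))) atTop (𝓝 1) :=
    (tendsto_rpow_div_mul_add 2 1 (-1) one_ne_zero.symm).comp
      (tendsto_atTop_add_const_right _ 1 tendsto_natCast_atTop_atTop)
  have hC' : Tendsto (fun n : ℕ => C ^ (2 / n : ℝ)) atTop (𝓝 1) := by
    have := (Real.continuousAt_const_rpow (b := 0) hC.ne').tendsto.comp
      (tendsto_const_div_atTop_nhds_zero_nat 2)
    simpa [Function.comp_def] using this
  have := hsucc.mul hC'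
  simp only [one_mul, mul_one, add_neg_cancel_right] at this
  refine this.congr fun n => ?_
  rw [Real.mul_rpow (by positivity) hC.le]

theorem exists_tendsto_nthDiameter_le {E : Set ℂ} (hE : Bornology.IsBounded E) {τ : ℝ}
    (hτ : chebyshevConstant E < τ) :
    ∃ g : ℕ → ℝ, Tendsto g atTop (𝓝 τ) ∧ ∀ᶠ n in atTop, nthDiameter E n ≤ g n := by
  obtain ⟨p, hp, hk, hpτ⟩ := exists_monic_supNormOn_lt hτ
  have hτ0 : 0 < τ := (chebyshevConstant_nonneg E).trans_lt hτ
  obtain ⟨C, hC, hmax⟩ := exists_maxVandermondeNorm_le hE hp hk hτ0 hpτ.le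
  refine ⟨fun n => ((n + 1) * C) ^ (2 / n : ℝ) * τ, ?_, ?_⟩
  · simpa using (tendsto_succ_mul_rpow_two_div hC).mul_const τ
  · exact eventually_atTop.2 ⟨1, fun n hn => nthDiameter_le hτ0 hC hmax (by omega)⟩

theorem transfiniteDiameter1_eq_chebyshevConstant {E : Set ℂ} (hE : Bornology.IsBounded E) :
    transfiniteDiameter1 E = chebyshevConstant E := by
  have hcobdd : IsCoboundedUnder (· ≤ ·) atTop (nthDiameter E) :=
    isBoundedUnder_of ⟨0, fun n => Real.rpow_nonneg (maxVandermondeNorm_nonneg E _) _⟩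
      |>.isCoboundedUnder_le
  rw [transfiniteDiameter1_eq_limsup_nthDiameter]
  apply le_antisymm
  · refine le_of_forall_gt_imp_ge_of_dense fun τ hτ => ?_
    obtain ⟨g, hg, hle⟩ := exists_tendsto_nthDiameter_le hE hτ
    exact (limsup_le_limsup hle hcobdd hg.isBoundedUnder_le).trans_eq hg.limsup_eq
  · obtain ⟨g, hg, hle⟩ := exists_tendsto_nthDiameter_le hE (lt_add_one (chebyshevConstant E))
    have hlow : ∀ᶠ n in atTop, chebyshevConstant E ≤ nthDiameter E n :=
      eventually_atTop.2 ⟨1, fun n hn => chebyshevConstant_le_nthDiameter hE (by omega)⟩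
    exact le_limsup_of_frequently_le hlow.frequently (hg.isBoundedUnder_le.mono_le hle)

theorem norm_multiset_prod {K : Type*} [NormedField K] (s : Multiset K) :
    ‖s.prod‖ = (s.map (‖·‖)).prod :=
  map_multiset_prod (normHom : K →*₀ ℝ).toMonoidHom s

/-- The norm of the resultant of `q` and `G`, computed from the roots of either polynomial. -/
theorem Polynomial.prod_norm_eval_roots_eq {K : Type*} [NormedField K] [IsAlgClosed K]
    {q : K[X]} (hq : q.Monic) (G : K[X]) :
    (q.roots.map fun β => ‖G.eval β‖).prod =
      ‖G.leadingCoeff‖ ^ q.natDegree * (G.roots.map fun α => ‖q.eval α‖).prod := by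
  have hG (β : K) : ‖G.eval β‖ = ‖G.leadingCoeff‖ * (G.roots.map fun α => ‖β - α‖).prod := by
    rw [(IsAlgClosed.splits G).eval_eq_prod_roots, norm_mul, norm_multiset_prod,
      Multiset.map_map]
    rfl
  have hq' (α : K) : ‖q.eval α‖ = (q.roots.map fun β => ‖β - α‖).prod := by
    rw [(IsAlgClosed.splits q).eval_eq_prod_roots_of_monic hq, norm_multiset_prod,
      Multiset.map_map]
    simp [norm_sub_rev]
  simp only [hG, hq', Multiset.prod_map_mul, Multiset.map_const', Multiset.prod_replicate,
    IsAlgClosed.card_roots_eq_natDegree]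
  rw [Multiset.prod_map_prod_map]

theorem Polynomial.isBounded_preimage_eval {R : Type*} [NormedRing R]
    [IsAbsoluteValue (norm : R → ℝ)] [ProperSpace R] {F : R[X]} (hF : 0 < F.degree) {E : Set R}
    (hE : Bornology.IsBounded E) : Bornology.IsBounded (F.eval ⁻¹' E) :=
  ((F.isProperMap_eval hF).isCompact_preimage hE.isCompact_closure).isBounded.subset
    (Set.preimage_mono subset_closure)

section preimage

variable {E : Set ℂ} {F : ℂ[X]}

theorem mul_chebyshevConstant_preimage_pow_le (hE : Bornology.IsBounded E)
    (hF : F.natDegree ≠ 0) :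
    ‖F.leadingCoeff‖ * chebyshevConstant (F.eval ⁻¹' E) ^ F.natDegree ≤ chebyshevConstant E := by
  have hc : F.leadingCoeff ≠ 0 := leadingCoeff_ne_zero.2 (by rintro rfl; simp at hF)
  refine le_chebyshevConstant (by positivity [chebyshevConstant_nonneg (F.eval ⁻¹' E)])
    fun p hp hm => ?_
  set r := C (F.leadingCoeff ^ p.natDegree)⁻¹ * p.comp F
  have hr : r.Monic := monic_C_mul_of_mul_leadingCoeff_eq_one <| by
    rw [leadingCoeff_comp hF, hp.leadingCoeff, one_mul, inv_mul_cancel₀ (pow_ne_zero _ hc)]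
  have hr_deg : r.natDegree = p.natDegree * F.natDegree := by
    rw [natDegree_C_mul (inv_ne_zero (pow_ne_zero _ hc)), natDegree_comp]
  have hr_norm : ‖F.leadingCoeff‖ ^ p.natDegree * supNormOn (F.eval ⁻¹' E) r ≤ supNormOn E p :=
    mul_supNormOn_le (by positivity) (supNormOn_nonneg E p) fun z hz => by
      rw [eval_mul, eval_C, eval_comp, norm_mul, norm_inv, norm_pow, ← mul_assoc,
        mul_inv_cancel₀ (by positivity), one_mul]
      exact norm_eval_le_supNormOn hE p hz
  have hcheb := chebyshevConstant_pow_natDegree_le (E := F.eval ⁻¹' E) hr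
    (by rw [hr_deg]; exact mul_ne_zero hm hF)
  rw [hr_deg] at hcheb
  calc (‖F.leadingCoeff‖ * chebyshevConstant (F.eval ⁻¹' E) ^ F.natDegree) ^ p.natDegree
      = ‖F.leadingCoeff‖ ^ p.natDegree *
          chebyshevConstant (F.eval ⁻¹' E) ^ (p.natDegree * F.natDegree) := by ring
    _ ≤ ‖F.leadingCoeff‖ ^ p.natDegree * supNormOn (F.eval ⁻¹' E) r := by gcongr
    _ ≤ supNormOn E p := hr_norm

theorem supNormOn_prod_X_sub_C_eval_roots_le (hS : Bornology.IsBounded (F.eval ⁻¹' E))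
    (hF : F.natDegree ≠ 0) {q : ℂ[X]} (hq : q.Monic) :
    supNormOn E ((q.roots.map fun β => F.eval β).map fun a => X - C a).prod ≤
      ‖F.leadingCoeff‖ ^ q.natDegree * supNormOn (F.eval ⁻¹' E) q ^ F.natDegree := by
  refine supNormOn_le (by positivity [supNormOn_nonneg (F.eval ⁻¹' E) q]) fun w hw => ?_
  have hG_lc : (F - C w).leadingCoeff = F.leadingCoeff := by
    rw [leadingCoeff, natDegree_sub_C, coeff_sub, coeff_C, if_neg hF, sub_zero]; rfl
  have hG_roots : ∀ α ∈ (F - C w).roots, α ∈ F.eval ⁻¹' E := fun α hα => by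
    have := (mem_roots'.1 hα).2
    rw [IsRoot, eval_sub, eval_C, sub_eq_zero] at this
    simpa [this] using hw
  have hG_card : (F - C w).roots.card = F.natDegree := by
    rw [IsAlgClosed.card_roots_eq_natDegree, natDegree_sub_C]
  calc ‖(((q.roots.map fun β => F.eval β).map fun a => X - C a).prod).eval w‖
      = (q.roots.map fun β => ‖(F - C w).eval β‖).prod := by
        rw [eval_multiset_prod, norm_multiset_prod, Multiset.map_map, Multiset.map_map]
        simp [norm_sub_rev]
    _ = ‖F.leadingCoeff‖ ^ q.natDegree * ((F - C w).roots.map fun α => ‖q.eval α‖).prod := by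
        rw [prod_norm_eval_roots_eq hq, hG_lc]
    _ ≤ ‖F.leadingCoeff‖ ^ q.natDegree * supNormOn (F.eval ⁻¹' E) q ^ F.natDegree := by
        gcongr
        rw [← hG_card, ← Multiset.prod_replicate, ← Multiset.map_const']
        exact Multiset.prod_map_le_prod_map₀ _ _ (fun _ _ => norm_nonneg _)
          fun α hα => norm_eval_le_supNormOn hS q (hG_roots α hα)

theorem chebyshevConstant_le_mul_preimage_pow (hE : Bornology.IsBounded E)
    (hF : F.natDegree ≠ 0) :
    chebyshevConstant E ≤ ‖F.leadingCoeff‖ * chebyshevConstant (F.eval ⁻¹' E) ^ F.natDegree := by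
  have hS := isBounded_preimage_eval (natDegree_pos_iff_degree_pos.1 (Nat.pos_of_ne_zero hF)) hE
  have hc : 0 < ‖F.leadingCoeff‖ :=
    norm_pos_iff.2 (leadingCoeff_ne_zero.2 (by rintro rfl; simp at hF))
  set y := (‖F.leadingCoeff‖⁻¹ * chebyshevConstant E) ^ (F.natDegree : ℝ)⁻¹
  have hy0 : 0 ≤ y := Real.rpow_nonneg (by positivity [chebyshevConstant_nonneg E]) _
  have hy : y ^ F.natDegree = ‖F.leadingCoeff‖⁻¹ * chebyshevConstant E :=
    Real.rpow_inv_natCast_pow (by positivity [chebyshevConstant_nonneg E]) hF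
  have hy_le : y ≤ chebyshevConstant (F.eval ⁻¹' E) := le_chebyshevConstant hy0 fun q hq hm => by
    set p := ((q.roots.map fun β => F.eval β).map fun a => X - C a).prod
    have hp : p.Monic := monic_multisetProd_X_sub_C _
    have hp_deg : p.natDegree = q.natDegree := by
      rw [natDegree_multiset_prod_X_sub_C_eq_card, Multiset.card_map,
        IsAlgClosed.card_roots_eq_natDegree]
    have hcheb := chebyshevConstant_pow_natDegree_le (E := E) hp (by rwa [hp_deg])
    rw [hp_deg] at hcheb
    refine (pow_le_pow_iff_left₀ (pow_nonneg hy0 q.natDegree) (supNormOn_nonneg _ q) hF).1 ?_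
    rw [← pow_mul, mul_comm, pow_mul, hy, mul_pow, inv_pow, inv_mul_le_iff₀ (by positivity)]
    exact hcheb.trans (supNormOn_prod_X_sub_C_eval_roots_le hS hF hq)
  calc chebyshevConstant E = ‖F.leadingCoeff‖ * y ^ F.natDegree := by
        rw [hy, mul_inv_cancel_left₀ hc.ne']
    _ ≤ ‖F.leadingCoeff‖ * chebyshevConstant (F.eval ⁻¹' E) ^ F.natDegree := by gcongr

end preimage

theorem chebyshevConstant_eq_mul_preimage_pow {E : Set ℂ} (hE : Bornology.IsBounded E)
    {F : ℂ[X]} (hF : F.natDegree ≠ 0) :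
    chebyshevConstant E = ‖F.leadingCoeff‖ * chebyshevConstant (F.eval ⁻¹' E) ^ F.natDegree :=
  (chebyshevConstant_le_mul_preimage_pow hE hF).antisymm
    (mul_chebyshevConstant_preimage_pow_le hE hF)

section sumCMulXPow

variable {R : Type*} [Semiring R] {d : ℕ} {a : ℕ → R}

theorem Polynomial.coeff_sum_range_C_mul_X_pow_self :
    (∑ k ∈ Finset.range (d + 1), C (a k) * X ^ k).coeff d = a d := by
  simp

theorem Polynomial.natDegree_sum_range_C_mul_X_pow (ha : a d ≠ 0) :
    (∑ k ∈ Finset.range (d + 1), C (a k) * X ^ k).natDegree = d := by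
  refine natDegree_eq_of_le_of_coeff_ne_zero (natDegree_sum_le_of_forall_le _ _ fun k hk => ?_)
    (by rwa [coeff_sum_range_C_mul_X_pow_self])
  exact (natDegree_C_mul_X_pow_le _ _).trans (Nat.lt_succ_iff.1 (Finset.mem_range.1 hk))

theorem Polynomial.leadingCoeff_sum_range_C_mul_X_pow (ha : a d ≠ 0) :
    (∑ k ∈ Finset.range (d + 1), C (a k) * X ^ k).leadingCoeff = a d := by
  rw [leadingCoeff, natDegree_sum_range_C_mul_X_pow ha, coeff_sum_range_C_mul_X_pow_self]

end sumCMulXPow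

/-- Transfinite diameter of the pullback of a bounded set `E ⊆ ℂ` by a polynomial
`F(z) = a_d z^d + ⋯ + a_0` of degree `d ≥ 1`:
`d_∞(F⁻¹E) = |a_d|^{-1/d} · d_∞(E)^{1/d}`. -/
theorem transfiniteDiameter_polynomial_preimage
    (d : ℕ) (hd : 1 ≤ d) (a : ℕ → ℂ) (ha : a d ≠ 0)
    (E : Set ℂ) (hE : Bornology.IsBounded E) :
    transfiniteDiameter1 ((fun z : ℂ => ∑ k ∈ Finset.range (d + 1), a k * z ^ k) ⁻¹' E)
      = ‖a d‖ ^ (-(1 : ℝ) / (d : ℝ))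
        * transfiniteDiameter1 E ^ ((1 : ℝ) / (d : ℝ)) := by
  set F : ℂ[X] := ∑ k ∈ Finset.range (d + 1), C (a k) * X ^ k
  have hF_eval : (fun z : ℂ => ∑ k ∈ Finset.range (d + 1), a k * z ^ k) = F.eval := by
    ext z; simp [F, eval_finsetSum]
  have hF_deg : F.natDegree = d := natDegree_sum_range_C_mul_X_pow ha
  have hF_lc : F.leadingCoeff = a d := leadingCoeff_sum_range_C_mul_X_pow ha
  have hd0 : d ≠ 0 := by omega
  have hS := isBounded_preimage_eval (natDegree_pos_iff_degree_pos.1 (hF_deg ▸ hd)) hE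
  have ha' : 0 < ‖a d‖ := norm_pos_iff.2 ha
  rw [hF_eval, transfiniteDiameter1_eq_chebyshevConstant hS,
    transfiniteDiameter1_eq_chebyshevConstant hE,
    chebyshevConstant_eq_mul_preimage_pow hE (hF_deg ▸ hd0), hF_deg, hF_lc, neg_div, one_div,
    Real.mul_rpow ha'.le (by positivity [chebyshevConstant_nonneg (F.eval ⁻¹' E)]),
    Real.pow_rpow_inv_natCast (chebyshevConstant_nonneg _) hd0, ← mul_assoc, ← Real.rpow_add ha',
    neg_add_cancel, Real.rpow_zero, one_mul]
end

section
/- Let F : ℂ^N → ℂ^N be a regular polynomial map of degree d ≥ 2. Then for every z ∈ ℂ^N the limit G^F(z) = lim_{n→∞} d^{−n} log⁺ ‖F^n(z)‖ exists (where log⁺(x) = max(0, log x)), the resulting function G^F : ℂ^N → [0, ∞) is continuous, and G^F(z) = 0 if and only if z belongs to the filled Julia set K_F = {z ∈ ℂ^N : sup_n ‖F^n(z)‖ < ∞}. -/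
/-- The Euclidean norm on `ℂ^N`. -/
noncomputable def eucNorm {N : ℕ} (z : Fin N → ℂ) : ℝ :=
  Real.sqrt (∑ i, ‖z i‖ ^ 2)

/-!
Regularity makes the top-degree part `F_h` vanish only at `0`, so `‖F_h‖` has a positive minimum
on the unit sphere and, by homogeneity, `c ‖z‖^d ≤ ‖F z‖ ≤ A ‖z‖^d` for large `z`. Hence
`h = log⁺ ‖·‖` satisfies `|h ∘ F - d h| ≤ C`, and `d⁻ⁿ h ∘ Fⁿ` has increments at most `C d⁻ⁿ⁻¹`:
it converges uniformly to a continuous `G` with `|d⁻ⁿ h (Fⁿ z) - G z| ≤ C/(d-1) d⁻ⁿ`. Bounded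
orbits give `G z = 0`, while a single `n` with `h (Fⁿ z) > C/(d-1)` already forces `G z > 0`.
-/

open Filter Topology Set Real MvPolynomial

section EscapeRate

variable {X : Type*} {f : X → X} {h : X → ℝ} {d C : ℝ}

lemma abs_comp_sub_mul_le_of_abs_sub_le {h' : X → ℝ} {K : ℝ} (hd : 0 ≤ d)
    (hC : ∀ x, |h (f x) - d * h x| ≤ C) (hK : ∀ x, |h' x - h x| ≤ K) (x : X) :
    |h' (f x) - d * h' x| ≤ C + (1 + d) * K := by
  have hfx := abs_le.mp (hC x)
  have hKfx := abs_le.mp (hK (f x))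
  have hKx := abs_le.mp (hK x)
  have hlow := mul_le_mul_of_nonneg_left hKx.1 hd
  have hup := mul_le_mul_of_nonneg_left hKx.2 hd
  rw [abs_le]
  constructor <;> linarith

lemma abs_inv_pow_mul_iterate_sub_succ_le (hd : 0 < d) (hC : ∀ x, |h (f x) - d * h x| ≤ C)
    (x : X) (n : ℕ) :
    |(d ^ n)⁻¹ * h (f^[n] x) - (d ^ (n + 1))⁻¹ * h (f^[n + 1] x)| ≤ C / d * d⁻¹ ^ n := by
  have hsplit : (d ^ n)⁻¹ * h (f^[n] x) - (d ^ (n + 1))⁻¹ * h (f^[n + 1] x)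
      = -((d ^ (n + 1))⁻¹ * (h (f (f^[n] x)) - d * h (f^[n] x))) := by
    rw [Function.iterate_succ_apply']; field_simp; ring
  rw [hsplit, abs_neg, abs_mul, abs_of_pos (by positivity)]
  calc (d ^ (n + 1))⁻¹ * |h (f (f^[n] x)) - d * h (f^[n] x)| ≤ (d ^ (n + 1))⁻¹ * C :=
        mul_le_mul_of_nonneg_left (hC _) (by positivity)
    _ = C / d * d⁻¹ ^ n := by rw [pow_succ, inv_pow]; field_simp

lemma exists_tendsto_inv_pow_mul_iterate (hd : 1 < d) (hC : ∀ x, |h (f x) - d * h x| ≤ C) :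
    ∃ G : X → ℝ, ∀ x, Tendsto (fun n ↦ (d ^ n)⁻¹ * h (f^[n] x)) atTop (𝓝 (G x)) ∧
      ∀ n, |(d ^ n)⁻¹ * h (f^[n] x) - G x| ≤ C / (d - 1) * (d ^ n)⁻¹ := by
  have hr : d⁻¹ < 1 := inv_lt_one_of_one_lt₀ hd
  have hstep (x : X) (n : ℕ) : dist ((d ^ n)⁻¹ * h (f^[n] x))
      ((d ^ (n + 1))⁻¹ * h (f^[n + 1] x)) ≤ C / d * d⁻¹ ^ n :=
    abs_inv_pow_mul_iterate_sub_succ_le (by linarith) hC x n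
  choose G hG using fun x ↦
    cauchySeq_tendsto_of_complete (cauchySeq_of_le_geometric _ _ hr (hstep x))
  refine ⟨G, fun x ↦ ⟨hG x, fun n ↦ ?_⟩⟩
  have hdist := dist_le_of_le_geometric_of_tendsto _ _ hr (hstep x) (hG x) n
  rw [← Real.dist_eq]
  convert hdist using 1
  rw [inv_pow]
  field_simp

lemma continuous_of_abs_inv_pow_mul_iterate_sub_le [TopologicalSpace X] (hd : 1 < d)
    (hf : Continuous f) (hh : Continuous h) {G : X → ℝ} {K : ℝ}
    (hG : ∀ x n, |(d ^ n)⁻¹ * h (f^[n] x) - G x| ≤ K * (d ^ n)⁻¹) : Continuous G := by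
  refine TendstoUniformly.continuous (F := fun n x ↦ (d ^ n)⁻¹ * h (f^[n] x)) (p := atTop) ?_
    (Frequently.of_forall fun n ↦ continuous_const.mul (hh.comp (hf.iterate n)))
  have hK : Tendsto (fun n : ℕ ↦ K * (d ^ n)⁻¹) atTop (𝓝 0) := by
    simpa using (tendsto_inv_atTop_zero.comp (tendsto_pow_atTop_atTop_of_one_lt hd)).const_mul K
  rw [Metric.tendstoUniformly_iff]
  intro ε hε
  filter_upwards [hK.eventually_lt_const hε] with n hn x
  rw [dist_comm, Real.dist_eq]
  exact (hG x n).trans_lt hn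

lemma eq_zero_iff_bddAbove_range_iterate (hd : 1 < d) (hh : ∀ x, 0 ≤ h x) {G : X → ℝ}
    {K : ℝ} {x : X} (hGx : Tendsto (fun n ↦ (d ^ n)⁻¹ * h (f^[n] x)) atTop (𝓝 (G x)))
    (hK : ∀ n, |(d ^ n)⁻¹ * h (f^[n] x) - G x| ≤ K * (d ^ n)⁻¹) :
    G x = 0 ↔ BddAbove (range fun n ↦ h (f^[n] x)) := by
  have hd0 : 0 < d := by linarith
  constructor
  · intro hG0
    by_contra hunb
    obtain ⟨_, ⟨n, rfl⟩, hn⟩ := not_bddAbove_iff.mp hunb K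
    have hclose := (abs_le.mp (hK n)).2
    have hpos : 0 < (d ^ n)⁻¹ * (h (f^[n] x) - K) := mul_pos (by positivity) (by linarith)
    linarith
  · rintro ⟨M, hM⟩
    have hM' (n : ℕ) : (d ^ n)⁻¹ * h (f^[n] x) ≤ M * (d ^ n)⁻¹ := by
      rw [mul_comm]
      exact mul_le_mul_of_nonneg_right (hM ⟨n, rfl⟩) (by positivity)
    have hlim : Tendsto (fun n : ℕ ↦ M * (d ^ n)⁻¹) atTop (𝓝 0) := by
      simpa using
        (tendsto_inv_atTop_zero.comp (tendsto_pow_atTop_atTop_of_one_lt hd)).const_mul M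
    refine tendsto_nhds_unique hGx (tendsto_of_tendsto_of_tendsto_of_le_of_le
      tendsto_const_nhds hlim (fun n ↦ ?_) hM')
    exact mul_nonneg (by positivity) (hh _)

end EscapeRate

lemma posLog_le_posLog_add_mul_posLog {a b A : ℝ} {d : ℕ} (ha : 0 ≤ a) (hb : 0 ≤ b)
    (h : a ≤ A * max 1 b ^ d) : log⁺ a ≤ log⁺ A + d * log⁺ b := by
  have hmax : log⁺ (max 1 b) = log⁺ b := by
    rw [posLog_eq_log_max_one hb, posLog_eq_log ((le_max_left 1 b).trans (le_abs_self _))]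
  calc log⁺ a ≤ log⁺ (A * max 1 b ^ d) := posLog_le_posLog ha h
    _ ≤ log⁺ A + log⁺ (max 1 b ^ d) := posLog_mul
    _ = log⁺ A + d * log⁺ b := by rw [posLog_pow, hmax]

lemma mul_posLog_le_posLog_add {a b c R : ℝ} {d : ℕ} (hc : 0 < c) (hb : 0 ≤ b)
    (h : R ≤ b → c * b ^ d ≤ a) : d * log⁺ b ≤ log⁺ a + d * log⁺ R + log⁺ c⁻¹ := by
  have hd : (0 : ℝ) ≤ d := d.cast_nonneg
  rcases lt_or_ge b R with hbR | hRb
  · have := mul_le_mul_of_nonneg_left (posLog_le_posLog hb hbR.le) hd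
    linarith [posLog_nonneg (x := a), posLog_nonneg (x := c⁻¹)]
  rcases lt_or_ge b 1 with hb1 | hb1
  · rw [(posLog_eq_zero_iff b).mpr (by rw [abs_of_nonneg hb]; exact hb1.le), mul_zero]
    have := mul_nonneg hd (posLog_nonneg (x := R))
    linarith [posLog_nonneg (x := a), posLog_nonneg (x := c⁻¹)]
  have hb0 : 0 < b := by linarith
  have hlog : log c + d * log b ≤ log a := by
    rw [← log_pow, ← log_mul hc.ne' (by positivity)]
    exact log_le_log (by positivity) (h hRb)
  have hlogc : -log c ≤ log⁺ c⁻¹ := by rw [← log_inv]; exact le_max_right _ _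
  have := mul_nonneg hd (posLog_nonneg (x := R))
  rw [posLog_eq_log (by rwa [abs_of_nonneg hb])]
  linarith [le_max_right 0 (log a), posLog_apply (x := a)]

lemma abs_posLog_norm_sub_mul_posLog_norm_le {E F : Type*} [SeminormedAddCommGroup E]
    [SeminormedAddCommGroup F] {g : E → F} {d : ℕ} {A c R : ℝ} (hc : 0 < c)
    (hU : ∀ x, ‖g x‖ ≤ A * max 1 ‖x‖ ^ d) (hL : ∀ x, R ≤ ‖x‖ → c * ‖x‖ ^ d ≤ ‖g x‖) (x : E) :
    |log⁺ ‖g x‖ - d * log⁺ ‖x‖| ≤ log⁺ A + d * log⁺ R + log⁺ c⁻¹ := by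
  have hup := posLog_le_posLog_add_mul_posLog (norm_nonneg _) (norm_nonneg _) (hU x)
  have hlow := mul_posLog_le_posLog_add hc (norm_nonneg _) (hL x)
  have := mul_nonneg d.cast_nonneg (posLog_nonneg (x := R))
  rw [abs_le]
  constructor <;> linarith [posLog_nonneg (x := c⁻¹), posLog_nonneg (x := A)]

lemma exists_half_mul_norm_pow_le_of_norm_sub_le {E F : Type*} [SeminormedAddCommGroup E]
    [SeminormedAddCommGroup F] {g H : E → F} {d : ℕ} {A c : ℝ} (hd : 0 < d) (hc : 0 < c)
    (hH : ∀ x, c * ‖x‖ ^ d ≤ ‖H x‖) (hgH : ∀ x, ‖g x - H x‖ ≤ A * max 1 ‖x‖ ^ (d - 1)) :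
    ∃ R, ∀ x, R ≤ ‖x‖ → c / 2 * ‖x‖ ^ d ≤ ‖g x‖ := by
  refine ⟨max 1 (2 * A / c), fun x hx ↦ ?_⟩
  have hx1 : 1 ≤ ‖x‖ := (le_max_left _ _).trans hx
  have hAx : A ≤ c / 2 * ‖x‖ := by
    have := (le_max_right _ _).trans hx
    rw [div_le_iff₀ hc] at this
    linarith
  have hpow : ‖x‖ ^ d = ‖x‖ ^ (d - 1) * ‖x‖ := by rw [← pow_succ, Nat.sub_add_cancel hd]
  have herr : A * ‖x‖ ^ (d - 1) ≤ c / 2 * ‖x‖ ^ d := by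
    have := mul_le_mul_of_nonneg_left hAx (by positivity : 0 ≤ ‖x‖ ^ (d - 1))
    rw [hpow]
    linarith
  have htri : ‖H x‖ ≤ ‖g x‖ + ‖g x - H x‖ := by
    simpa using norm_sub_le (g x) (g x - H x)
  have := hgH x
  rw [max_eq_right hx1] at this
  linarith [hH x]

lemma MvPolynomial.norm_eval_le_of_totalDegree_le {σ 𝕜 : Type*} [Fintype σ] [NormedField 𝕜]
    {q : MvPolynomial σ 𝕜} {m : ℕ} (hq : q.totalDegree ≤ m) (z : σ → 𝕜) :
    ‖eval z q‖ ≤ (∑ s ∈ q.support, ‖q.coeff s‖) * max 1 ‖z‖ ^ m := by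
  have hmono (s : σ →₀ ℕ) (hs : s ∈ q.support) : ‖∏ i, z i ^ s i‖ ≤ max 1 ‖z‖ ^ m :=
    calc ‖∏ i, z i ^ s i‖ = ∏ i, ‖z i‖ ^ s i := by simp [norm_prod, norm_pow]
      _ ≤ ∏ i, max 1 ‖z‖ ^ s i := by
        gcongr with i; exact (norm_le_pi_norm z i).trans (le_max_right _ _)
      _ = max 1 ‖z‖ ^ s.degree := by rw [Finset.prod_pow_eq_pow_sum, Finsupp.degree_eq_sum]
      _ ≤ max 1 ‖z‖ ^ m := pow_le_pow_right₀ (le_max_left _ _) ((le_totalDegree hs).trans hq)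
  rw [eval_eq', Finset.sum_mul]
  refine (norm_sum_le _ _).trans (Finset.sum_le_sum fun s hs ↦ ?_)
  rw [norm_mul]
  exact mul_le_mul_of_nonneg_left (hmono s hs) (norm_nonneg _)

lemma MvPolynomial.IsHomogeneous.eval_smul {σ R : Type*} [Fintype σ] [CommSemiring R]
    {q : MvPolynomial σ R} {n : ℕ} (hq : q.IsHomogeneous n) (c : R) (z : σ → R) :
    eval (c • z) q = c ^ n * eval z q := by
  rw [eval_eq', eval_eq', Finset.mul_sum]
  refine Finset.sum_congr rfl fun s hs ↦ ?_
  have hdeg : ∑ i, s i = n := by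
    rw [← Finsupp.degree_eq_sum]
    by_contra hne
    exact mem_support_iff.mp hs (hq.coeff_eq_zero hne)
  simp only [Pi.smul_apply, smul_eq_mul, mul_pow, Finset.prod_mul_distrib,
    Finset.prod_pow_eq_pow_sum, hdeg]
  ring

lemma MvPolynomial.totalDegree_sub_homogeneousComponent_le {σ R : Type*} [CommRing R]
    {p : MvPolynomial σ R} {n : ℕ} (hp : p.totalDegree ≤ n) :
    (p - homogeneousComponent n p).totalDegree ≤ n - 1 := by
  refine Finset.sup_le fun s hs ↦ ?_
  have hcoeff := mem_support_iff.mp hs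
  rw [coeff_sub, coeff_homogeneousComponent] at hcoeff
  split_ifs at hcoeff with hsn
  · exact absurd (sub_self _) hcoeff
  · rw [sub_zero] at hcoeff
    have hle := (le_totalDegree (mem_support_iff.mpr hcoeff)).trans hp
    have hne : (s.sum fun _ e ↦ e) ≠ n := hsn
    omega

lemma exists_pos_mul_norm_pow_le_norm_of_homogeneous {𝕜 E F : Type*} [RCLike 𝕜]
    [NormedAddCommGroup E] [NormedSpace 𝕜 E] [ProperSpace E] [NormedAddCommGroup F]
    [NormedSpace 𝕜 F] {g : E → F} {d : ℕ} (hd : 0 < d) (hg : Continuous g)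
    (hhom : ∀ (a : 𝕜) x, g (a • x) = a ^ d • g x) (hzero : ∀ x, g x = 0 → x = 0) :
    ∃ c > 0, ∀ x, c * ‖x‖ ^ d ≤ ‖g x‖ := by
  rcases subsingleton_or_nontrivial E with hE | hE
  · refine ⟨1, one_pos, fun x ↦ ?_⟩
    rw [Subsingleton.elim x 0, norm_zero, zero_pow hd.ne', mul_zero]
    exact norm_nonneg _
  obtain ⟨u, hu, hmin⟩ := (isCompact_sphere (0 : E) 1).exists_isMinOn
    (nonempty_coe_sort.mp (NormedSpace.sphere_nonempty_rclike 𝕜 zero_le_one))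
    hg.norm.continuousOn
  have hu1 : ‖u‖ = 1 := by simpa using hu
  refine ⟨‖g u‖, norm_pos_iff.mpr fun h0 ↦ by simp [hzero u h0] at hu1, fun x ↦ ?_⟩
  rcases eq_or_ne x 0 with rfl | hx
  · rw [norm_zero, zero_pow hd.ne', mul_zero]
    exact norm_nonneg _
  have hx0 : 0 < ‖x‖ := norm_pos_iff.mpr hx
  set v : E := ((‖x‖ : 𝕜))⁻¹ • x
  have hv : v ∈ Metric.sphere (0 : E) 1 := by simpa using norm_smul_inv_norm (𝕜 := 𝕜) hx
  have hgx : ‖g x‖ = ‖g v‖ * ‖x‖ ^ d := by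
    have hxv : x = (‖x‖ : 𝕜) • v := by simp [v, smul_smul, hx0.ne']
    conv_lhs => rw [hxv]
    rw [hhom, norm_smul, norm_pow, RCLike.norm_ofReal, abs_of_pos hx0, mul_comm]
  rw [hgx]
  exact mul_le_mul_of_nonneg_right (hmin hv) (by positivity)

lemma MvPolynomial.norm_eval_pi_le {σ ι 𝕜 : Type*} [Fintype σ] [Fintype ι] [NormedField 𝕜]
    {P : ι → MvPolynomial σ 𝕜} {m : ℕ} (hP : ∀ i, (P i).totalDegree ≤ m) (z : σ → 𝕜) :
    ‖fun i ↦ eval z (P i)‖ ≤ (∑ i, ∑ s ∈ (P i).support, ‖(P i).coeff s‖) * max 1 ‖z‖ ^ m := by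
  refine (pi_norm_le_iff_of_nonneg (by positivity)).mpr fun i ↦ ?_
  refine (norm_eval_le_of_totalDegree_le (hP i) z).trans
    (mul_le_mul_of_nonneg_right ?_ (by positivity))
  exact Finset.single_le_sum (f := fun i ↦ ∑ s ∈ (P i).support, ‖(P i).coeff s‖)
    (fun _ _ ↦ by positivity) (Finset.mem_univ i)

lemma MvPolynomial.exists_mul_norm_pow_le_norm_eval_pi {σ ι 𝕜 : Type*}
    [Fintype σ] [Fintype ι] [RCLike 𝕜] {P : ι → MvPolynomial σ 𝕜} {d : ℕ} (hd : 0 < d)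
    (hP : ∀ i, (P i).totalDegree ≤ d)
    (hreg : ∀ z, (fun i ↦ eval z (homogeneousComponent d (P i))) = 0 → z = 0) :
    ∃ c > 0, ∃ R, ∀ z, R ≤ ‖z‖ → c * ‖z‖ ^ d ≤ ‖fun i ↦ eval z (P i)‖ := by
  have hhom (a : 𝕜) (z : σ → 𝕜) : (fun i ↦ eval (a • z) (homogeneousComponent d (P i)))
      = a ^ d • fun i ↦ eval z (homogeneousComponent d (P i)) := by
    ext i
    rw [Pi.smul_apply, smul_eq_mul, (homogeneousComponent_isHomogeneous d (P i)).eval_smul]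
  obtain ⟨c, hc, hlow⟩ := exists_pos_mul_norm_pow_le_norm_of_homogeneous hd
    (continuous_pi fun i ↦ continuous_eval (homogeneousComponent d (P i))) hhom hreg
  have hrem (z : σ → 𝕜) : (fun i ↦ eval z (P i)) - (fun i ↦ eval z (homogeneousComponent d (P i)))
      = fun i ↦ eval z (P i - homogeneousComponent d (P i)) := by
    ext i; simp
  obtain ⟨R, hR⟩ := exists_half_mul_norm_pow_le_of_norm_sub_le hd hc hlow fun z ↦ by
    rw [hrem]; exact norm_eval_pi_le (fun i ↦ totalDegree_sub_homogeneousComponent_le (hP i)) z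
  exact ⟨c / 2, by positivity, R, hR⟩

lemma eucNorm_eq_norm_toLp {N : ℕ} (z : Fin N → ℂ) :
    eucNorm z = ‖(WithLp.toLp 2 z : EuclideanSpace ℂ (Fin N))‖ := by
  simp [eucNorm, EuclideanSpace.norm_eq]

lemma continuous_eucNorm {N : ℕ} : Continuous (eucNorm (N := N)) := by
  simp_rw [funext eucNorm_eq_norm_toLp]
  exact (PiLp.continuous_toLp 2 _).norm

lemma norm_le_eucNorm {N : ℕ} (z : Fin N → ℂ) : ‖z‖ ≤ eucNorm z := by
  rw [eucNorm_eq_norm_toLp]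
  exact (pi_norm_le_iff_of_nonneg (norm_nonneg _)).mpr (PiLp.norm_apply_le (WithLp.toLp 2 z))

lemma eucNorm_le_sqrt_mul_norm {N : ℕ} (z : Fin N → ℂ) : eucNorm z ≤ √N * ‖z‖ := by
  calc eucNorm z ≤ √(∑ _i : Fin N, ‖z‖ ^ 2) :=
        Real.sqrt_le_sqrt (Finset.sum_le_sum fun i _ ↦ by gcongr; exact norm_le_pi_norm z i)
    _ = √N * ‖z‖ := by simp [Real.sqrt_mul, Real.sqrt_sq]

lemma abs_posLog_eucNorm_sub_posLog_norm_le {N : ℕ} (z : Fin N → ℂ) :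
    |log⁺ (eucNorm z) - log⁺ ‖z‖| ≤ log⁺ √N := by
  have hlow := posLog_le_posLog (norm_nonneg z) (norm_le_eucNorm z)
  have hup : log⁺ (eucNorm z) ≤ log⁺ √N + log⁺ ‖z‖ :=
    (posLog_le_posLog (Real.sqrt_nonneg _) (eucNorm_le_sqrt_mul_norm z)).trans posLog_mul
  rw [abs_le]
  constructor <;> linarith [posLog_nonneg (x := √N)]

lemma MvPolynomial.exists_abs_posLog_eucNorm_eval_sub_mul_le {N d : ℕ} (hd : 0 < d)
    {P : Fin N → MvPolynomial (Fin N) ℂ} (hP : ∀ i, (P i).totalDegree ≤ d)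
    (hreg : ∀ z, (fun i ↦ eval z (homogeneousComponent d (P i))) = 0 → z = 0) :
    ∃ C, ∀ z, |log⁺ (eucNorm fun i ↦ eval z (P i)) - d * log⁺ (eucNorm z)| ≤ C := by
  obtain ⟨c, hc, R, hL⟩ := exists_mul_norm_pow_le_norm_eval_pi hd hP hreg
  exact ⟨_, abs_comp_sub_mul_le_of_abs_sub_le d.cast_nonneg
    (abs_posLog_norm_sub_mul_posLog_norm_le hc (norm_eval_pi_le hP) hL)
    abs_posLog_eucNorm_sub_posLog_norm_le⟩

lemma bddAbove_range_posLog_iff {ι : Type*} {u : ι → ℝ} (hu : ∀ i, 0 ≤ u i) :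
    BddAbove (range fun i ↦ log⁺ (u i)) ↔ BddAbove (range u) := by
  constructor
  · rintro ⟨M, hM⟩
    refine ⟨exp M, forall_mem_range.mpr fun i ↦ ?_⟩
    calc u i ≤ max 1 (u i) := le_max_right _ _
      _ = exp (log⁺ (u i)) := by rw [posLog_eq_log_max_one (hu i), exp_log (by positivity)]
      _ ≤ exp M := exp_le_exp.mpr (hM ⟨i, rfl⟩)
  · rintro ⟨M, hM⟩
    exact ⟨log⁺ M, forall_mem_range.mpr fun i ↦ posLog_le_posLog (hu i) (hM ⟨i, rfl⟩)⟩

/-- For a regular polynomial map `F : ℂ^N → ℂ^N` of degree `d ≥ 2`, the escape-rate function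
`G^F(z) = lim_{n→∞} d^{−n} log⁺ ‖Fⁿ(z)‖` exists (with `log⁺ x = max 0 (log x)`), is
continuous and nonnegative, and vanishes exactly on the filled Julia set
`K_F = {z ∈ ℂ^N : sup_n ‖Fⁿ(z)‖ < ∞}`. -/
theorem escapeRate_exists_continuous_vanishes_on_filledJulia
    (N d : ℕ) (hd : 2 ≤ d) (P : Fin N → MvPolynomial (Fin N) ℂ)
    (hdeg : ∀ i, (P i).totalDegree = d)
    (F : (Fin N → ℂ) → (Fin N → ℂ))
    (hF : F = fun z => fun i => MvPolynomial.eval z (P i))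
    (hreg : (fun z : Fin N → ℂ => fun i =>
        MvPolynomial.eval z (MvPolynomial.homogeneousComponent d (P i))) ⁻¹' {0}
      = ({0} : Set (Fin N → ℂ))) :
    ∃ G : (Fin N → ℂ) → ℝ,
      (∀ z, Filter.Tendsto
          (fun n : ℕ => ((d : ℝ) ^ n)⁻¹ * max 0 (Real.log (eucNorm (F^[n] z))))
          Filter.atTop (nhds (G z))) ∧
      Continuous G ∧
      (∀ z, 0 ≤ G z) ∧
      (∀ z, G z = 0 ↔ z ∈ {w : Fin N → ℂ |
          BddAbove (Set.range fun n : ℕ => eucNorm (F^[n] w))}) := by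
  have hd1 : (1 : ℝ) < d := by exact_mod_cast hd
  have hzero (z : Fin N → ℂ) (hz : (fun i ↦ eval z (homogeneousComponent d (P i))) = 0) :
      z = 0 := by
    simpa using hreg.subset (mem_preimage.mpr hz)
  obtain ⟨C, hC⟩ := exists_abs_posLog_eucNorm_eval_sub_mul_le (by omega) (fun i ↦ (hdeg i).le) hzero
  subst hF
  obtain ⟨G, hG⟩ := exists_tendsto_inv_pow_mul_iterate
    (f := fun z i ↦ eval z (P i)) (h := fun z ↦ log⁺ (eucNorm z)) hd1 hC
  have hFcont : Continuous fun z : Fin N → ℂ ↦ fun i ↦ eval z (P i) :=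
    continuous_pi fun i ↦ continuous_eval (P i)
  refine ⟨G, fun z ↦ (hG z).1,
    continuous_of_abs_inv_pow_mul_iterate_sub_le hd1 hFcont
      (continuous_posLog.comp continuous_eucNorm) fun z ↦ (hG z).2,
    fun z ↦ ge_of_tendsto' (hG z).1 fun n ↦ mul_nonneg (by positivity) posLog_nonneg,
    fun z ↦ ?_⟩
  rw [eq_zero_iff_bddAbove_range_iterate hd1 (fun _ ↦ posLog_nonneg) (hG z).1 (hG z).2]
  exact bddAbove_range_posLog_iff fun _ ↦ Real.sqrt_nonneg _
end
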